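/- arXiv:1703.10459 — 2 statements merged into one kernel-verified Lean document; each statement's English description precedes it below -/
import Mathlib

section
/- Let 𝓗 be a real separable Hilbert space, let E₁,…,Eₙ be measurable spaces and let Φ : E₁×…×Eₙ → 𝓗 be a bounded measurable function such that for every index ℓ and all choices of coordinates z₁,…,zₙ and z′_ℓ one has ‖Φ(z₁,…,z_ℓ,…,zₙ) − Φ(z₁,…,z′_ℓ,…,zₙ)‖_𝓗 ≤ R. If Z₁,…,Zₙ are independent random variables with Zᵢ taking values in Eᵢ, then E(‖Φ(Z₁,…,Zₙ) − E[Φ(Z₁,…,Zₙ)]‖²_𝓗) ≤ n R². -/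
/-!
Split off one coordinate at a time. For a fixed first coordinate `x`, the Pythagorean identity
`E‖f - c‖² = E‖f - E f‖² + ‖E f - c‖²` in the remaining coordinates writes the variance as the
mean conditional variance, at most `(n - 1) R²` by induction, plus the mean squared deviation of
the conditional mean `x ↦ E[Φ | x]` from `E Φ`, at most `R²` because changing `x` moves the
conditional mean by at most `R`. Independence makes the law of `(Z₁, …, Zₙ)` the product of the
marginals, so the theorem reduces to product measures.
-/

open MeasureTheory ProbabilityTheory

section

variable {α β : Type*} [MeasurableSpace α] [MeasurableSpace β]
  {F : Type*} [NormedAddCommGroup F] [NormedSpace ℝ F]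
  {H : Type*} [NormedAddCommGroup H] [InnerProductSpace ℝ H] [CompleteSpace H]

theorem MeasureTheory.MeasurePreserving.integral_norm_sub_integral_sq {μ : Measure α}
    {ν : Measure β} {f : α → β} (hf : MeasurePreserving f μ ν) {Φ : β → F}
    (hΦ : AEStronglyMeasurable Φ ν) :
    ∫ x, ‖Φ (f x) - ∫ x', Φ (f x') ∂μ‖ ^ 2 ∂μ = ∫ y, ‖Φ y - ∫ y', Φ y' ∂ν‖ ^ 2 ∂ν := by
  rw [← hf.map_eq] at hΦ ⊢
  rw [integral_map hf.aemeasurable hΦ, integral_map hf.aemeasurable (by fun_prop)]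

theorem MeasureTheory.norm_integral_sub_integral_le [CompleteSpace F] {μ : Measure α}
    [IsProbabilityMeasure μ] {f g : α → F} (hf : Integrable f μ) (hg : Integrable g μ) {R : ℝ}
    (h : ∀ x, ‖f x - g x‖ ≤ R) :
    ‖∫ x, f x ∂μ - ∫ x, g x ∂μ‖ ≤ R := by
  rw [← integral_sub hf hg]
  simpa using norm_integral_le_of_norm_le_const (μ := μ) (ae_of_all _ h)

theorem MeasureTheory.integral_norm_sub_sq_eq {μ : Measure α} [IsProbabilityMeasure μ]
    {f : α → H} (hf : MemLp f 2 μ) (c : H) :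
    ∫ x, ‖f x - c‖ ^ 2 ∂μ = ∫ x, ‖f x - ∫ y, f y ∂μ‖ ^ 2 ∂μ + ‖∫ y, f y ∂μ - c‖ ^ 2 := by
  set m := ∫ y, f y ∂μ
  have hfi : Integrable f μ := hf.integrable one_le_two
  have hcentered : Integrable (fun x => f x - m) μ := hfi.sub (integrable_const m)
  have hcentered_sq : Integrable (fun x => ‖f x - m‖ ^ 2) μ :=
    (hf.sub (memLp_const m)).integrable_norm_pow two_ne_zero
  have hcross : Integrable (fun x => 2 * inner ℝ (m - c) (f x - m)) μ :=
    (hcentered.const_inner _).const_mul 2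
  have hrest : Integrable (fun x => 2 * inner ℝ (m - c) (f x - m) + ‖m - c‖ ^ 2) μ :=
    hcross.add (integrable_const _)
  have hmean_zero : ∫ x, (f x - m) ∂μ = 0 := by
    simp [integral_sub hfi (integrable_const m), m]
  calc ∫ x, ‖f x - c‖ ^ 2 ∂μ
      = ∫ x, (‖f x - m‖ ^ 2 + (2 * inner ℝ (m - c) (f x - m) + ‖m - c‖ ^ 2)) ∂μ := by
        congr with x
        have := norm_add_sq_real (f x - m) (m - c)
        rw [sub_add_sub_cancel] at this
        rw [this, real_inner_comm]
        ring
    _ = ∫ x, ‖f x - m‖ ^ 2 ∂μ + ‖m - c‖ ^ 2 := by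
        rw [integral_add hcentered_sq hrest,
          integral_add hcross (integrable_const _), integral_const_mul,
          integral_inner hcentered, hmean_zero]
        simp

theorem MeasureTheory.integral_norm_sub_integral_sq_prod_le {μ : Measure α} {ν : Measure β}
    [IsProbabilityMeasure μ] [IsProbabilityMeasure ν] {f : α × β → H} (hf : StronglyMeasurable f)
    {C : ℝ} (hC : ∀ p, ‖f p‖ ≤ C) {A R : ℝ}
    (hA : ∀ x, ∫ y, ‖f (x, y) - ∫ y', f (x, y') ∂ν‖ ^ 2 ∂ν ≤ A)
    (hR : ∀ x x' y, ‖f (x, y) - f (x', y)‖ ≤ R) :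
    ∫ p, ‖f p - ∫ p', f p' ∂(μ.prod ν)‖ ^ 2 ∂(μ.prod ν) ≤ A + R ^ 2 := by
  set m := ∫ p', f p' ∂(μ.prod ν)
  have hf2 : MemLp f 2 (μ.prod ν) := .of_bound hf.aestronglyMeasurable C (ae_of_all _ hC)
  have hfi : Integrable f (μ.prod ν) := hf2.integrable one_le_two
  have hfiber : ∀ x, MemLp (fun y => f (x, y)) 2 ν := fun x =>
    .of_bound (hf.comp_measurable measurable_prodMk_left).aestronglyMeasurable C
      (ae_of_all _ fun _ => hC _)
  have hsq : Integrable (fun p => ‖f p - m‖ ^ 2) (μ.prod ν) :=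
    (hf2.sub (memLp_const m)).integrable_norm_pow two_ne_zero
  have hcond_mean_diff : ∀ x x', ‖∫ y, f (x, y) ∂ν - ∫ y, f (x', y) ∂ν‖ ≤ R := fun x x' =>
    norm_integral_sub_integral_le ((hfiber x).integrable one_le_two)
      ((hfiber x').integrable one_le_two) (hR x x')
  have hcond_mean : ∀ x, ‖∫ y, f (x, y) ∂ν - m‖ ≤ R := fun x => by
    simpa [m, integral_prod f hfi] using norm_integral_sub_integral_le (μ := μ)
      (integrable_const _) hfi.integral_prod_left (hcond_mean_diff x)
  have hfiber_le : ∀ x, ∫ y, ‖f (x, y) - m‖ ^ 2 ∂ν ≤ A + R ^ 2 := fun x => by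
    rw [integral_norm_sub_sq_eq (hfiber x)]
    exact add_le_add (hA x) (pow_le_pow_left₀ (norm_nonneg _) (hcond_mean x) 2)
  calc ∫ p, ‖f p - m‖ ^ 2 ∂(μ.prod ν) = ∫ x, ∫ y, ‖f (x, y) - m‖ ^ 2 ∂ν ∂μ :=
        integral_prod _ hsq
    _ ≤ ∫ _, (A + R ^ 2) ∂μ := integral_mono hsq.integral_prod_left (integrable_const _) hfiber_le
    _ = A + R ^ 2 := by simp

theorem MeasureTheory.integral_norm_sub_integral_sq_pi_le {n : ℕ} {E : Fin n → Type*}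
    [∀ i, MeasurableSpace (E i)] (μ : ∀ i, Measure (E i)) [∀ i, IsProbabilityMeasure (μ i)]
    {Φ : (∀ i, E i) → H} (hΦ : StronglyMeasurable Φ) {C : ℝ} (hC : ∀ z, ‖Φ z‖ ≤ C) {R : ℝ}
    (hdiff : ∀ (ℓ : Fin n) (z : ∀ i, E i) (z' : E ℓ), ‖Φ z - Φ (Function.update z ℓ z')‖ ≤ R) :
    ∫ x, ‖Φ x - ∫ x', Φ x' ∂Measure.pi μ‖ ^ 2 ∂Measure.pi μ ≤ n * R ^ 2 := by
  induction n with
  | zero =>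
    have hconst : ∀ x, Φ x = Φ default := fun x => congrArg Φ (Subsingleton.elim x default)
    simp [hconst]
  | succ n ih =>
    have hins : MeasurePreserving (fun p => Fin.insertNth 0 p.1 p.2)
        ((μ 0).prod (Measure.pi fun j => μ (Fin.succAbove 0 j))) (Measure.pi μ) :=
      (measurePreserving_piFinSuccAbove μ 0).symm
    have hΦins : StronglyMeasurable fun p : E 0 × _ => Φ (Fin.insertNth 0 p.1 p.2) :=
      hΦ.comp_measurable hins.measurable
    rw [← hins.integral_norm_sub_integral_sq hΦ.aestronglyMeasurable, Nat.cast_succ, add_one_mul]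
    refine integral_norm_sub_integral_sq_prod_le hΦins (fun _ => hC _) (fun x => ?_)
      (fun x x' y => ?_)
    · refine ih _ (hΦins.comp_measurable measurable_prodMk_left) (fun _ => hC _) fun ℓ z z' => ?_
      rw [Fin.insertNth_update]
      exact hdiff (Fin.succAbove 0 ℓ) (Fin.insertNth 0 x z) z'
    · simpa using hdiff 0 (Fin.insertNth 0 x y) x'

end

theorem hilbert_mcdiarmid_expectation_general
    {Ω : Type*} [MeasureSpace Ω] [IsProbabilityMeasure (ℙ : Measure Ω)]
    {H : Type*} [NormedAddCommGroup H] [InnerProductSpace ℝ H] [CompleteSpace H]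
    {n : ℕ} {E : Fin n → Type*} [mE : ∀ i, MeasurableSpace (E i)]
    (Φ : (∀ i, E i) → H) (hΦmeas : StronglyMeasurable Φ)
    (hΦbdd : ∃ C : ℝ, ∀ z, ‖Φ z‖ ≤ C)
    (R : ℝ)
    (hdiff : ∀ (ℓ : Fin n) (z : ∀ i, E i) (z' : E ℓ),
      ‖Φ z - Φ (Function.update z ℓ z')‖ ≤ R)
    (Z : ∀ i, Ω → E i) (hZmeas : ∀ i, Measurable (Z i))
    (hindep : iIndepFun Z ℙ) :
    ∫ ω, ‖Φ (fun i => Z i ω) - ∫ ω', Φ (fun i => Z i ω') ∂ℙ‖ ^ 2 ∂ℙ ≤ n * R ^ 2 := by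
  obtain ⟨C, hC⟩ := hΦbdd
  have : ∀ i, IsProbabilityMeasure ((ℙ : Measure Ω).map (Z i)) := fun i =>
    Measure.isProbabilityMeasure_map (hZmeas i).aemeasurable
  have hlaw : MeasurePreserving (fun ω i => Z i ω) ℙ
      (Measure.pi fun i => (ℙ : Measure Ω).map (Z i)) :=
    ⟨measurable_pi_lambda _ hZmeas,
      (iIndepFun_iff_map_fun_eq_pi_map fun i => (hZmeas i).aemeasurable).1 hindep⟩
  rw [hlaw.integral_norm_sub_integral_sq hΦmeas.aestronglyMeasurable]
  exact integral_norm_sub_integral_sq_pi_le _ hΦmeas hC hdiff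

/-- **Bounded-differences variance bound, Hilbert space version.**
If `Φ` is a bounded measurable function of `n` independent random variables with values in a
real separable Hilbert space, whose value changes by at most `R` in norm when a single
coordinate is modified, then `E‖Φ(Z) − EΦ(Z)‖² ≤ n R²`. -/
theorem hilbert_mcdiarmid_expectation
    {Ω : Type*} [MeasureSpace Ω] [IsProbabilityMeasure (ℙ : Measure Ω)]
    {H : Type*} [NormedAddCommGroup H] [InnerProductSpace ℝ H] [CompleteSpace H]
    [TopologicalSpace.SeparableSpace H]
    {n : ℕ} {E : Fin n → Type*} [mE : ∀ i, MeasurableSpace (E i)]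
    (Φ : (∀ i, E i) → H) (hΦmeas : StronglyMeasurable Φ)
    (hΦbdd : ∃ C : ℝ, ∀ z, ‖Φ z‖ ≤ C)
    (R : ℝ)
    (hdiff : ∀ (ℓ : Fin n) (z : ∀ i, E i) (z' : E ℓ),
      ‖Φ z - Φ (Function.update z ℓ z')‖ ≤ R)
    (Z : ∀ i, Ω → E i) (hZmeas : ∀ i, Measurable (Z i))
    (hindep : iIndepFun Z ℙ) :
    ∫ ω, ‖Φ (fun i => Z i ω) - ∫ ω', Φ (fun i => Z i ω') ∂ℙ‖ ^ 2 ∂ℙ ≤ n * R ^ 2 :=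
  hilbert_mcdiarmid_expectation_general (mE := mE) Φ hΦmeas hΦbdd R hdiff Z hZmeas hindep
end

section
/- Let (a_j)_{j≥0} and (b_j)_{j≥0} be two nonincreasing square-summable sequences of nonnegative real numbers and let 0 < ε₁ < ε₂. Then #{j : b_j > ε₂} ≤ #{j : a_j > ε₁} + (Σ_{j≥0} (a_j − b_j)²)/(ε₂ − ε₁)². Equivalently, for two positive self-adjoint Hilbert–Schmidt operators T₁, T₂ with decreasingly ordered eigenvalue sequences λ(T₁), λ(T₂): deg_∞(T₂, ε₂) ≤ deg_∞(T₁, ε₁) + ‖λ(T₁) − λ(T₂)‖²_{ℓ²}/(ε₂ − ε₁)². -/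
/-!
Pair the two sequences index by index. An index `j` with `b j > ε₂` either lies in
`S = {j | a j > ε₁}`, or has `a j ≤ ε₁`, in which case `b j - a j > ε₂ - ε₁` and the index
contributes more than `(ε₂ - ε₁)²` to `∑ (a j - b j)²`. Hence at most `‖a - b‖² / (ε₂ - ε₁)²`
indices lie outside `S`; and `S` is finite because `a` is square-summable and `ε₁ > 0`.
-/

open Set

theorem Summable.sq_sub {ι : Type*} {a b : ι → ℝ} (ha : Summable fun j => a j ^ 2)
    (hb : Summable fun j => b j ^ 2) : Summable fun j => (a j - b j) ^ 2 :=
  .of_nonneg_of_le (fun _ => sq_nonneg _) (fun j => by nlinarith [sq_nonneg (a j + b j)])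
    ((ha.mul_left 2).add (hb.mul_left 2))

theorem Summable.finite_setOf_lt {ι : Type*} {f : ι → ℝ} (hf : Summable f) {c : ℝ}
    (hc : 0 < c) : {j | c < f j}.Finite := by
  simpa only [not_le] using Filter.eventually_cofinite.mp
    (hf.tendsto_cofinite_zero.eventually (ge_mem_nhds hc))

theorem Summable.finite_setOf_lt_of_sq {ι : Type*} {a : ι → ℝ} (ha : Summable fun j => a j ^ 2)
    {c : ℝ} (hc : 0 < c) : {j | c < a j}.Finite :=
  (ha.finite_setOf_lt (pow_pos hc 2)).subset fun _ hj =>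
    pow_lt_pow_left₀ (show c < _ from hj) hc.le two_ne_zero

theorem ncard_mul_le_tsum {ι : Type*} {f : ι → ℝ} (hf : Summable f) (hf0 : ∀ j, 0 ≤ f j)
    {s : Set ι} {c : ℝ} (hc : ∀ j ∈ s, c ≤ f j) : s.ncard * c ≤ ∑' j, f j := by
  rcases s.finite_or_infinite with hs | hs
  · calc s.ncard * c = hs.toFinset.card • c := by rw [ncard_eq_toFinset_card s hs, nsmul_eq_mul]
      _ ≤ ∑ j ∈ hs.toFinset, f j :=
        hs.toFinset.card_nsmul_le_sum f c fun j hj => hc j (hs.mem_toFinset.mp hj)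
      _ ≤ ∑' j, f j := hf.sum_le_tsum _ fun j _ => hf0 j
  · simpa only [hs.ncard, Nat.cast_zero, zero_mul] using tsum_nonneg hf0

theorem sq_sub_le_sq_sub_of_le_of_lt {x y ε₁ ε₂ : ℝ} (hε : ε₁ ≤ ε₂) (hx : x ≤ ε₁) (hy : ε₂ < y) :
    (ε₂ - ε₁) ^ 2 ≤ (x - y) ^ 2 := by
  rw [← neg_sub y x, neg_sq]
  exact pow_le_pow_left₀ (sub_nonneg.mpr hε) (by linarith) 2

theorem count_above_level_comparison_general
    (a b : ℕ → ℝ)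
    (ha2 : Summable fun j => a j ^ 2) (hb2 : Summable fun j => b j ^ 2)
    (ε₁ ε₂ : ℝ) (hε₁ : 0 < ε₁) (hε : ε₁ < ε₂) :
    ({j : ℕ | ε₂ < b j}.ncard : ℝ) ≤
      ({j : ℕ | ε₁ < a j}.ncard : ℝ) + (∑' j, (a j - b j) ^ 2) / (ε₂ - ε₁) ^ 2 := by
  set S := {j : ℕ | ε₁ < a j}
  set U := {j : ℕ | ε₂ < b j}
  have hgap : ∀ j ∈ U \ S, (ε₂ - ε₁) ^ 2 ≤ (a j - b j) ^ 2 := fun j ⟨hbj, haj⟩ =>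
    sq_sub_le_sq_sub_of_le_of_lt hε.le (not_lt.mp haj) hbj
  have hU : (U.ncard : ℝ) ≤ (U \ S).ncard + S.ncard := by
    exact_mod_cast ncard_le_ncard_sdiff_add_ncard U S (ha2.finite_setOf_lt_of_sq hε₁)
  have hdiff : ((U \ S).ncard : ℝ) ≤ (∑' j, (a j - b j) ^ 2) / (ε₂ - ε₁) ^ 2 :=
    (le_div_iff₀ (pow_pos (sub_pos.mpr hε) 2)).mpr
      (ncard_mul_le_tsum (ha2.sq_sub hb2) (fun _ => sq_nonneg _) hgap)
  linarith

/-- **Comparison of level-counting functions of two nonincreasing square-summable nonnegative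
sequences: `#{j : b_j > ε₂} ≤ #{j : a_j > ε₁} + ‖a − b‖²_{ℓ²}/(ε₂ − ε₁)²`.** -/
theorem count_above_level_comparison
    (a b : ℕ → ℝ) (ha : Antitone a) (hb : Antitone b)
    (ha0 : ∀ j, 0 ≤ a j) (hb0 : ∀ j, 0 ≤ b j)
    (ha2 : Summable fun j => a j ^ 2) (hb2 : Summable fun j => b j ^ 2)
    (ε₁ ε₂ : ℝ) (hε₁ : 0 < ε₁) (hε : ε₁ < ε₂) :
    ({j : ℕ | ε₂ < b j}.ncard : ℝ) ≤
      ({j : ℕ | ε₁ < a j}.ncard : ℝ) + (∑' j, (a j - b j) ^ 2) / (ε₂ - ε₁) ^ 2 :=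
  count_above_level_comparison_general a b ha2 hb2 ε₁ ε₂ hε₁ hε
end
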